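/- The limit as t → ∞ of Φ⁻¹(2Φ(t) - 1)/t equals 1. -/

import Mathlib

open Real Set

/-- Standard Gaussian density. -/
noncomputable def phi (t : ℝ) : ℝ := (Real.sqrt (2 * Real.pi))⁻¹ * Real.exp (-t ^ 2 / 2)

/-- Standard Gaussian cumulative distribution function. -/
noncomputable def Phi (t : ℝ) : ℝ := ∫ s in Set.Iic t, phi s

/-!
For `0 ≤ c < 1` and large `t`, the Gaussian tail beyond `t` is at most `φ(t)/t` (Mills' ratio),
whereas the mass of `[c t, t]` is at least `(1 - c) t φ(t)`, since `φ` decreases on `[0, ∞)`.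
Hence `Φ(c t) ≤ 2Φ(t) - 1 < Φ(t)`, so `c t ≤ Φ⁻¹(2Φ(t) - 1) < t`, and `c` can be taken
arbitrarily close to `1`.
-/

open Filter Topology MeasureTheory ProbabilityTheory

lemma phi_eq_gaussianPDFReal : phi = gaussianPDFReal 0 1 := by
  ext t
  simp [phi, gaussianPDFReal]

lemma phi_pos (t : ℝ) : 0 < phi t := by
  unfold phi
  positivity

lemma integrable_phi : Integrable phi := by
  rw [phi_eq_gaussianPDFReal]
  exact integrable_gaussianPDFReal 0 1

lemma integral_phi : ∫ s, phi s = 1 := by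
  rw [phi_eq_gaussianPDFReal]
  exact integral_gaussianPDFReal_eq_one 0 one_ne_zero

lemma hasDerivAt_phi (t : ℝ) : HasDerivAt phi (-t * phi t) t := by
  have h : HasDerivAt (fun s : ℝ => -s ^ 2 / 2) (-t) t := by
    rw [show -t = -(2 * t) / 2 by ring]
    simpa using (hasDerivAt_pow 2 t).fun_neg.div_const 2
  exact (h.exp.const_mul (Real.sqrt (2 * Real.pi))⁻¹).congr_deriv (by unfold phi; ring)

lemma antitoneOn_phi : AntitoneOn phi (Ici 0) := by
  intro s hs t _ hst
  unfold phi
  gcongr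

lemma tendsto_phi_atTop : Tendsto phi atTop (𝓝 0) := by
  have h : Tendsto (fun t : ℝ => -t ^ 2 / 2) atTop atBot :=
    (tendsto_neg_atTop_atBot.comp (tendsto_pow_atTop two_ne_zero)).atBot_div_const two_pos
  have := (tendsto_exp_atBot.comp h).const_mul (Real.sqrt (2 * Real.pi))⁻¹
  rwa [mul_zero] at this

lemma Phi_nonneg (t : ℝ) : 0 ≤ Phi t :=
  setIntegral_nonneg measurableSet_Iic fun s _ => (phi_pos s).le

lemma Phi_sub_Phi (a b : ℝ) : Phi b - Phi a = ∫ s in a..b, phi s :=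
  intervalIntegral.integral_Iic_sub_Iic integrable_phi.integrableOn integrable_phi.integrableOn

lemma one_sub_Phi (t : ℝ) : 1 - Phi t = ∫ s in Ioi t, phi s := by
  rw [← integral_phi, ← integral_add_compl measurableSet_Iic integrable_phi, compl_Iic, Phi]
  ring

lemma Phi_strictMono : StrictMono Phi := fun a b hab => by
  have : 0 < Phi b - Phi a := by
    rw [Phi_sub_Phi]
    exact intervalIntegral.intervalIntegral_pos_of_pos integrable_phi.intervalIntegrable phi_pos hab
  linarith

lemma Phi_pos (t : ℝ) : 0 < Phi t :=
  (Phi_nonneg (t - 1)).trans_lt (Phi_strictMono (by linarith))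

lemma Phi_lt_one (t : ℝ) : Phi t < 1 := by
  have : 0 ≤ 1 - Phi (t + 1) := by
    rw [one_sub_Phi]
    exact setIntegral_nonneg measurableSet_Ioi fun s _ => (phi_pos s).le
  linarith [Phi_strictMono (lt_add_one t)]

lemma hasDerivAt_neg_phi (t : ℝ) : HasDerivAt (fun s => -phi s) (t * phi t) t := by
  simpa using (hasDerivAt_phi t).fun_neg

lemma integrableOn_Ioi_mul_phi {t : ℝ} (ht : 0 ≤ t) :
    IntegrableOn (fun s => s * phi s) (Ioi t) :=
  integrableOn_Ioi_deriv_of_nonneg' (fun s _ => hasDerivAt_neg_phi s)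
    (fun s hs => mul_nonneg (ht.trans hs.out.le) (phi_pos s).le) tendsto_phi_atTop.neg

lemma integral_Ioi_mul_phi {t : ℝ} (ht : 0 ≤ t) : ∫ s in Ioi t, s * phi s = phi t := by
  have h := integral_Ioi_of_hasDerivAt_of_tendsto' (fun s _ => hasDerivAt_neg_phi s)
    (integrableOn_Ioi_mul_phi ht) tendsto_phi_atTop.neg
  rwa [neg_zero, zero_sub, neg_neg] at h

lemma one_sub_Phi_le {t : ℝ} (ht : 0 < t) : 1 - Phi t ≤ phi t / t := by
  rw [one_sub_Phi, ← integral_Ioi_mul_phi ht.le, div_eq_inv_mul, ← integral_const_mul]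
  refine setIntegral_mono_on integrable_phi.integrableOn
    ((integrableOn_Ioi_mul_phi ht.le).const_mul _) measurableSet_Ioi fun s hs => ?_
  rw [← mul_assoc]
  exact le_mul_of_one_le_left (phi_pos s).le ((one_le_inv_mul₀ ht).2 hs.out.le)

lemma mul_phi_le_Phi_sub_Phi {a b : ℝ} (ha : 0 ≤ a) (hab : a ≤ b) :
    (b - a) * phi b ≤ Phi b - Phi a := by
  rw [Phi_sub_Phi, ← smul_eq_mul, ← intervalIntegral.integral_const]
  exact intervalIntegral.integral_mono_on hab intervalIntegrable_const
    integrable_phi.intervalIntegrable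
    fun s hs => antitoneOn_phi (ha.trans hs.1) (ha.trans (hs.1.trans hs.2)) hs.2

lemma Phi_mul_le_two_mul_Phi_sub_one {c t : ℝ} (hc : 0 ≤ c) (ht : 0 < t)
    (hlarge : 1 ≤ (1 - c) * t ^ 2) : Phi (c * t) ≤ 2 * Phi t - 1 := by
  have hct : c * t ≤ t := by nlinarith
  have hband := mul_phi_le_Phi_sub_Phi (mul_nonneg hc ht.le) hct
  have hmills := one_sub_Phi_le ht
  have hcompare : phi t / t ≤ (t - c * t) * phi t := by
    rw [div_le_iff₀ ht]
    nlinarith [phi_pos t]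
  linarith

lemma eventually_Phiinv_two_mul_Phi_sub_one_div_mem_Ico {Φinv : ℝ → ℝ}
    (hinv : ∀ v ∈ Ioo (0 : ℝ) 1, Phi (Φinv v) = v) {c : ℝ} (hc0 : 0 ≤ c) (hc1 : c < 1) :
    ∀ᶠ t in atTop, Φinv (2 * Phi t - 1) / t ∈ Ico c 1 := by
  have hlarge : ∀ᶠ t : ℝ in atTop, 1 ≤ (1 - c) * t ^ 2 :=
    ((tendsto_pow_atTop two_ne_zero).const_mul_atTop (sub_pos.2 hc1)).eventually_ge_atTop 1
  filter_upwards [hlarge, eventually_gt_atTop 0] with t hlarge ht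
  have hlow := Phi_mul_le_two_mul_Phi_sub_one hc0 ht hlarge
  have hhigh : 2 * Phi t - 1 < Phi t := by linarith [Phi_lt_one t]
  have hv := hinv _ ⟨(Phi_pos _).trans_le hlow, hhigh.trans (Phi_lt_one t)⟩
  rw [← hv] at hlow hhigh
  rw [mem_Ico, le_div_iff₀ ht, div_lt_one ht]
  exact ⟨Phi_strictMono.le_iff_le.1 hlow, Phi_strictMono.lt_iff_lt.1 hhigh⟩

theorem stmt_9_general (Φinv : ℝ → ℝ)
    (hinv : ∀ v ∈ Set.Ioo (0:ℝ) 1, Phi (Φinv v) = v) :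
    Filter.Tendsto (fun t => Φinv (2 * Phi t - 1) / t) Filter.atTop (nhds 1) := by
  rw [tendsto_order]
  refine ⟨fun a ha => ?_, fun b hb => ?_⟩
  · obtain ⟨c, hac, hc1⟩ := exists_between (max_lt ha one_pos)
    filter_upwards [eventually_Phiinv_two_mul_Phi_sub_one_div_mem_Ico hinv
      ((le_max_right a 0).trans hac.le) hc1] with t ht
    exact ((le_max_left a 0).trans_lt hac).trans_le ht.1
  · filter_upwards [eventually_Phiinv_two_mul_Phi_sub_one_div_mem_Ico hinv le_rfl one_pos]
      with t ht
    exact ht.2.trans hb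

/-- `lim_{t → ∞} Φ⁻¹(2Φ(t) - 1)/t = 1`. -/
theorem stmt_9 (Φinv : ℝ → ℝ)
    (hinv : ∀ v ∈ Set.Ioo (0:ℝ) 1, Phi (Φinv v) = v)
    (hinv' : ∀ t : ℝ, Φinv (Phi t) = t) :
    Filter.Tendsto (fun t => Φinv (2 * Phi t - 1) / t) Filter.atTop (nhds 1) :=
  stmt_9_general Φinv hinv
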